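/- The matrix H_c(1) has a nontrivial Jordan block at the eigenvalue 3: the number 3 is a root of multiplicity exactly 2 of the characteristic polynomial of H_c(1), while the kernel of H_c(1) − 3·I₅ is one-dimensional (the geometric multiplicity of the eigenvalue 3 equals 1). -/

import Mathlib

open Matrix

/-- The Hamiltonian `H_c(R)` of Eq. (dvojak). -/
def Hc (R : ℝ) : Matrix (Fin 5) (Fin 5) ℝ :=
  !![2 + R, -1 + R, 0, 0, 0;
     -1, 2, -1, 0, 0;
     0, -1, 2, -1, 0;
     0, 0, -1, 2, -1 + R;
     0, 0, 0, -1, 2 + R]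

/-!
At `R = 1` the first row of `H_c(1)` is `3 e₀ᵀ` and its last column is `3 e₄`, so expanding the
determinant along them splits off `(X - 3)²` from the characteristic polynomial, leaving the
characteristic polynomial `X³ - 6X² + 10X - 4` of the middle tridiagonal block, which is `-1` at
`3`. On the other hand `H_c(1) - 3` has zero first row and zero last column, and its rows `1, …, 4`
restricted to the coordinates `0, …, 3` form an upper triangular matrix with `-1` on the diagonal,
so back substitution shows that its kernel is spanned by `e₄`.
-/

open Polynomial

theorem Polynomial.rootMultiplicity_mul_X_sub_C_pow_of_not_isRoot {R : Type*} [CommRing R]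
    {p : R[X]} {a : R} (hp : ¬p.IsRoot a) (n : ℕ) :
    (p * (X - C a) ^ n).rootMultiplicity a = n := by
  rw [rootMultiplicity_mul_X_sub_C_pow fun h => hp (by simp [h]), rootMultiplicity_eq_zero hp,
    zero_add]

theorem Hc_one_charpoly :
    (Hc 1).charpoly = (X ^ 3 - 6 * X ^ 2 + 10 * X - 4) * (X - C 3) ^ 2 := by
  have hcharmatrix : charmatrix (Hc 1) =
      !![X - C 3, 0, 0, 0, 0;
         1, X - 2, 1, 0, 0;
         0, 1, X - 2, 1, 0;
         0, 0, 1, X - 2, 0;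
         0, 0, 0, 1, X - C 3] := by
    ext i j
    fin_cases i <;> fin_cases j <;> norm_num [Hc, charmatrix_apply, Fin.ext_iff, map_ofNat]
  rw [charpoly, hcharmatrix]
  simp [det_succ_row_zero, Fin.sum_univ_succ, Fin.succAbove, submatrix]
  ring

theorem Hc_one_sub_three_smul_one : Hc 1 - (3 : ℝ) • (1 : Matrix (Fin 5) (Fin 5) ℝ) =
    !![0, 0, 0, 0, 0;
       -1, -1, -1, 0, 0;
       0, -1, -1, -1, 0;
       0, 0, -1, -1, 0;
       0, 0, 0, -1, 0] := by
  ext i j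
  fin_cases i <;> fin_cases j <;> norm_num [Hc, one_apply]

theorem ker_mulVecLin_Hc_one_sub_three_smul_one :
    LinearMap.ker (mulVecLin (Hc 1 - (3 : ℝ) • (1 : Matrix (Fin 5) (Fin 5) ℝ))) =
      Submodule.span ℝ {Pi.single 4 1} := by
  ext x
  rw [Hc_one_sub_three_smul_one, LinearMap.mem_ker, Submodule.mem_span_singleton]
  constructor
  · intro h
    have row (i : Fin 5) := congrFun h i
    simp only [mulVecLin_apply, mulVec, dotProduct, Fin.sum_univ_five] at row
    have hx3 : x 3 = 0 := by simpa using row 4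
    have hx2 : x 2 = 0 := by simpa [hx3] using row 3
    have hx1 : x 1 = 0 := by simpa [hx2, hx3] using row 2
    have hx0 : x 0 = 0 := by simpa [hx1, hx2] using row 1
    refine ⟨x 4, funext fun i => ?_⟩
    fin_cases i <;> simp [hx0, hx1, hx2, hx3]
  · rintro ⟨c, rfl⟩
    ext i
    fin_cases i <;> simp

/-- at `R = 1`, the eigenvalue `3` of `H_c(1)` has algebraic
multiplicity exactly `2` but geometric multiplicity `1`, i.e. a nontrivial
Jordan block occurs. -/
theorem Hc_one_jordan_block :
    (Polynomial.rootMultiplicity 3 (Matrix.charpoly (Hc 1)) = 2) ∧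
    Module.finrank ℝ
      (LinearMap.ker (Matrix.mulVecLin (Hc 1 - (3 : ℝ) • (1 : Matrix (Fin 5) (Fin 5) ℝ)))) = 1 := by
  refine ⟨?_, ?_⟩
  · rw [Hc_one_charpoly]
    exact rootMultiplicity_mul_X_sub_C_pow_of_not_isRoot (by norm_num) 2
  · rw [ker_mulVecLin_Hc_one_sub_three_smul_one]
    exact finrank_span_singleton (by simp)
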